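/- arXiv:1209.4800 — 3 statements merged into one kernel-verified Lean document; each statement's English description precedes it below -/
import Mathlib

section
/- The multiplicity of the trivial SL(2,ℂ)-representation M₁ in (ℂ²)^{⊗(2k)} (diagonal action) equals the k-th Catalan number C_k = (1/(k+1))·binom(2k,k). -/
/-!
A vector is `SL₂(ℂ)`-invariant iff the Lie algebra elements `e`, `f`, `h` kill it: along a
one-parameter subgroup `g(t)` with generator `X` (here `1 + t e`, `1 + t f`, `diag(eᵗ, e⁻ᵗ)`)
the curve `t ↦ g(t) w` has derivative `g(t) (X w)`, and `SL₂(ℂ)` is generated by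
transvections and diagonal matrices. For the standard Hermitian form `f` is the adjoint of `e`
and `[e, f] = h`, so on the `μ`-eigenspace of `h` we have `‖f v‖² = ‖e v‖² + μ ‖v‖²`.
The basis vector of a word with `ℓ` ones has `h`-weight `2k - 2ℓ`. Hence on the weight-`0`
space `ker f ⊆ ker e`, and `f ∘ e` is injective on the weight-`(-2)` space, so `f` maps
weight `0` onto weight `-2`. The invariants therefore have dimension
`C(2k, k) - C(2k, k + 1) = catalan k`.
-/

open Matrix TensorProduct

abbrev SL2 : Type := Matrix.SpecialLinearGroup (Fin 2) ℂ

/-- The tensor power `(ℂ²)^{⊗N}` realized as functions on multi-indices. -/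
abbrev TP (N : ℕ) : Type := (Fin N → Fin 2) → ℂ

/-- The symmetric group `S_N` acting on `(ℂ²)^{⊗N}` by permuting tensor factors. -/
noncomputable def permRep (N : ℕ) : Representation ℂ (Equiv.Perm (Fin N)) (TP N) where
  toFun σ := LinearMap.funLeft ℂ ℂ (fun x => x ∘ σ)
  map_one' := by ext f x; rfl
  map_mul' := by intro σ τ; rfl

/-- The Kronecker `N`-th power of a `2×2` matrix. -/
noncomputable def kronPow (N : ℕ) (g : Matrix (Fin 2) (Fin 2) ℂ) :
    Matrix (Fin N → Fin 2) (Fin N → Fin 2) ℂ :=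
  Matrix.of fun x y => ∏ i, g (x i) (y i)

/-- The diagonal action of `SL(2,ℂ)` on `(ℂ²)^{⊗N}`. -/
noncomputable def sl2Rep (N : ℕ) : Representation ℂ SL2 (TP N) where
  toFun g := Matrix.toLin' (kronPow N (g : Matrix (Fin 2) (Fin 2) ℂ))
  map_one' := by
    show Matrix.toLin' (kronPow N ((1 : SL2) : Matrix (Fin 2) (Fin 2) ℂ)) = 1
    have : kronPow N ((1 : SL2) : Matrix (Fin 2) (Fin 2) ℂ) = 1 := by
      ext x y
      by_cases h : x = y
      · subst h; simp [kronPow, Matrix.one_apply]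
      · obtain ⟨i, hi⟩ := Function.ne_iff.mp h
        simp only [kronPow, Matrix.one_apply, Matrix.of_apply]
        rw [if_neg h, Finset.prod_eq_zero (Finset.mem_univ i)]
        simp [Matrix.one_apply, hi]
    rw [this]
    ext f x
    simp [Matrix.toLin'_one]
  map_mul' := by
    intro g h
    show Matrix.toLin' (kronPow N ((g * h : SL2) : Matrix (Fin 2) (Fin 2) ℂ)) = _
    have : kronPow N ((g * h : SL2) : Matrix (Fin 2) (Fin 2) ℂ)
        = kronPow N g * kronPow N h := by
      ext x y
      simp only [kronPow, Matrix.of_apply, Matrix.mul_apply,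
        Matrix.SpecialLinearGroup.coe_mul]
      rw [Finset.prod_univ_sum, Fintype.piFinset_univ]
      exact Finset.sum_congr rfl fun z _ => Finset.prod_mul_distrib
    rw [this]
    exact Matrix.toLin'_mul _ _
  
def IsIrreducibleRep {G V : Type*} [Monoid G] [AddCommGroup V] [Module ℂ V]
    (ρ : Representation ℂ G V) : Prop :=
  (∃ v : V, v ≠ 0) ∧
    ∀ p : Submodule ℂ V, (∀ g : G, ∀ v ∈ p, ρ g v ∈ p) → p = ⊥ ∨ p = ⊤

/-- The submodule of invariant vectors of a representation. -/
def repInvariants {G V : Type*} [Monoid G] [AddCommGroup V] [Module ℂ V]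
    (ρ : Representation ℂ G V) : Submodule ℂ V where
  carrier := {v | ∀ g, ρ g v = v}
  add_mem' := by intro a b ha hb g; rw [map_add, ha g, hb g]
  zero_mem' := by intro g; simp
  smul_mem' := by intro c v hv g; rw [_root_.map_smul, hv g]

open Finset Function Module End

section LieRep

variable {ι α R : Type*} [Fintype ι] [DecidableEq ι] [Fintype α] [CommRing R]

noncomputable def lieRep : Matrix α α R →ₗ[R] Module.End R ((ι → α) → R) :=
  LinearMap.mk₂ R (fun X v x => ∑ i, ∑ b, X (x i) b * v (update x i b))
    (fun _ _ _ => by ext; simp [add_mul, sum_add_distrib])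
    (fun _ _ _ => by ext; simp [mul_assoc, mul_sum])
    (fun _ _ _ => by ext; simp [mul_add, sum_add_distrib])
    (fun _ _ _ => by ext; simp [mul_left_comm, mul_sum])

theorem lieRep_apply (X : Matrix α α R) (v : (ι → α) → R) (x : ι → α) :
    lieRep X v x = ∑ i, ∑ b, X (x i) b * v (update x i b) := rfl

theorem lieRep_diagonal [DecidableEq α] (D : α → R) :
    lieRep (diagonal D) = toLin' (diagonal fun x : ι → α => ∑ i, D (x i)) := by
  ext v x
  simp [lieRep_apply, diagonal_apply, mulVec, dotProduct, sum_mul]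

theorem lieRep_lieRep_apply (X Y : Matrix α α R) (v : (ι → α) → R) (x : ι → α) :
    lieRep X (lieRep Y v) x = lieRep (X * Y) v x +
      ∑ i, ∑ j ∈ univ.erase i, ∑ b, ∑ c,
        X (x i) b * Y (x j) c * v (update (update x i b) j c) := by
  have hsplit : ∀ i b, lieRep Y v (update x i b) = ∑ c, Y b c * v (update x i c) +
      ∑ j ∈ univ.erase i, ∑ c, Y (x j) c * v (update (update x i b) j c) := by
    intro i b
    rw [lieRep_apply, ← add_sum_erase _ _ (mem_univ i)]
    congr 1
    · simp
    · refine sum_congr rfl fun j hj => ?_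
      rw [update_of_ne (ne_of_mem_erase hj)]
  simp only [lieRep_apply, hsplit, mul_add, sum_add_distrib, Matrix.mul_apply, sum_mul, mul_sum,
    mul_assoc]
  congr 1
  · exact sum_congr rfl fun i _ => sum_comm
  · exact sum_congr rfl fun i _ => sum_comm

-- Cross terms, acting on two different tensor factors, cancel in the commutator.
theorem lieRep_lie (X Y : Matrix α α R) :
    lieRep (ι := ι) ⁅X, Y⁆ = ⁅lieRep (ι := ι) X, lieRep Y⁆ := by
  ext v x
  have hsymm : ∀ Z W : Matrix α α R,
      ∑ i, ∑ j ∈ univ.erase i, ∑ b, ∑ c, Z (x i) b * W (x j) c * v (update (update x i b) j c) =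
      ∑ i, ∑ j ∈ univ.erase i, ∑ b, ∑ c, W (x i) b * Z (x j) c * v (update (update x i b) j c) := by
    intro Z W
    rw [sum_comm' (t' := univ) (s' := fun j => univ.erase j) (by simp [and_comm, eq_comm])]
    refine sum_congr rfl fun j _ => sum_congr rfl fun i hi => ?_
    rw [sum_comm]
    refine sum_congr rfl fun b _ => sum_congr rfl fun c _ => ?_
    rw [update_comm (ne_of_mem_erase hi)]
    ring
  simp only [Ring.lie_def, map_sub, LinearMap.sub_apply, Pi.sub_apply, Module.End.mul_apply,
    lieRep_lieRep_apply, hsymm X Y]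
  ring

variable [StarRing R]

theorem star_lieRep_dotProduct (X : Matrix α α R) (v w : (ι → α) → R) :
    star (lieRep X v) ⬝ᵥ w = star v ⬝ᵥ lieRep Xᴴ w := by
  simp only [dotProduct, Pi.star_apply, lieRep_apply, star_sum, star_mul', conjTranspose_apply,
    sum_mul, mul_sum]
  conv_lhs => rw [sum_comm]
  conv_rhs => rw [sum_comm]
  refine sum_congr rfl fun i _ => ?_
  have hinv : Involutive fun p : (ι → α) × α => (update p.1 i p.2, p.1 i) := fun p => by simp
  simp only [← Fintype.sum_prod_type']
  refine Fintype.sum_bijective _ hinv.bijective _ _ fun p => ?_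
  simp only [update_self, update_idem, update_eq_self]
  ring

theorem star_lieRep_conjTranspose_dotProduct_self (X : Matrix α α R) {μ : R}
    {v : (ι → α) → R} (hv : v ∈ eigenspace (lieRep ⁅X, Xᴴ⁆) μ) :
    star (lieRep Xᴴ v) ⬝ᵥ lieRep Xᴴ v =
      star (lieRep X v) ⬝ᵥ lieRep X v + μ * (star v ⬝ᵥ v) := by
  rw [mem_eigenspace_iff, lieRep_lie, Ring.lie_def, LinearMap.sub_apply, Module.End.mul_apply,
    Module.End.mul_apply, sub_eq_iff_eq_add] at hv
  rw [star_lieRep_dotProduct, conjTranspose_conjTranspose, hv, dotProduct_add, dotProduct_smul,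
    ← conjTranspose_conjTranspose X, ← star_lieRep_dotProduct, conjTranspose_conjTranspose,
    smul_eq_mul, add_comm]

end LieRep

theorem mapsTo_eigenspace_of_lie_eq_smul {R M : Type*} [CommRing R] [AddCommGroup M]
    [Module R M] {A B : Module.End R M} {c : R} (h : ⁅A, B⁆ = c • B) (μ : R) :
    Set.MapsTo B (eigenspace A μ) (eigenspace A (μ + c)) := by
  intro v hv
  rw [SetLike.mem_coe, mem_eigenspace_iff] at hv ⊢
  have := congr($h v)
  rw [Ring.lie_def, LinearMap.sub_apply, Module.End.mul_apply, Module.End.mul_apply, hv,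
    map_smul, LinearMap.smul_apply, sub_eq_iff_eq_add] at this
  rw [this, add_smul, add_comm]

theorem finrank_map_add_finrank_inf_ker {K V V₂ : Type*} [Field K] [AddCommGroup V] [Module K V]
    [AddCommGroup V₂] [Module K V₂] [FiniteDimensional K V] (f : V →ₗ[K] V₂)
    (W : Submodule K V) :
    finrank K (W.map f) + finrank K (W ⊓ LinearMap.ker f : Submodule K V) = finrank K W := by
  rw [← Submodule.map_comap_subtype, Submodule.finrank_map_subtype_eq,
    ← LinearMap.ker_domRestrict, ← LinearMap.range_domRestrict,
    LinearMap.finrank_range_add_finrank_ker]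

theorem finrank_eigenspace_toLin'_diagonal {n K : Type*} [Fintype n] [DecidableEq n] [Field K]
    (d : n → K) (μ : K) :
    finrank K (eigenspace (toLin' (diagonal d)) μ) = Nat.card {x // d x = μ} := by
  classical
  let restrict := LinearMap.funLeft K K (Subtype.val : {x // d x ≠ μ} → n)
  have heq : eigenspace (toLin' (diagonal d)) μ = LinearMap.ker restrict := by
    ext v
    simp only [mem_eigenspace_iff, LinearMap.mem_ker, funext_iff, toLin'_apply, mulVec_diagonal,
      Pi.smul_apply, smul_eq_mul, restrict, LinearMap.funLeft_apply, Pi.zero_apply,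
      Subtype.forall, ← sub_eq_zero (a := d _ * _), ← sub_mul, mul_eq_zero, sub_eq_zero]
    exact forall_congr' fun x => or_iff_not_imp_left
  have hrange : LinearMap.range restrict = ⊤ := LinearMap.range_eq_top.2
    (LinearMap.funLeft_surjective_of_injective _ _ _ Subtype.val_injective)
  have hrank := restrict.finrank_range_add_finrank_ker
  rw [hrange, finrank_top, finrank_fintype_fun_eq_card, finrank_fintype_fun_eq_card, ← heq,
    Fintype.card_subtype_compl] at hrank
  have := Fintype.card_subtype_le fun x => d x = μ
  rw [Nat.card_eq_fintype_card]
  omega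

theorem card_hammingNorm_eq {ι : Type*} [Fintype ι] [DecidableEq ι] (ℓ : ℕ) :
    Nat.card {x : ι → Fin 2 // hammingNorm x = ℓ} = (Fintype.card ι).choose ℓ := by
  have hfin : ∀ a : Fin 2, (if a ≠ 0 then 1 else 0) = a := by decide
  let support : (ι → Fin 2) ≃ Finset ι :=
    { toFun x := {i | x i ≠ 0}
      invFun s i := if i ∈ s then 1 else 0
      left_inv x := by ext i; simp [hfin]
      right_inv s := by ext i; simp }
  rw [← Fintype.card_finset_len, ← Nat.card_eq_fintype_card]
  exact Nat.card_congr (support.subtypeEquiv fun x => Iff.rfl)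

theorem sum_prod_erase_one_apply_mul {ι α R : Type*} [Fintype ι] [DecidableEq ι] [Fintype α]
    [DecidableEq α] [CommSemiring R] (x : ι → α) (i : ι) (g : (ι → α) → R) :
    ∑ y, (∏ j ∈ univ.erase i, (1 : Matrix α α R) (x j) (y j)) * g y = ∑ b, g (update x i b) := by
  have hfilter : univ.filter (fun y : ι → α => ∀ j ∈ univ.erase i, x j = y j) =
      univ.image (update x i) := by
    ext y
    simp only [mem_filter, mem_univ, true_and, mem_erase, mem_image]
    constructor
    · intro h
      refine ⟨y i, ?_⟩
      rw [eq_comm, eq_update_iff]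
      exact ⟨rfl, fun j hj => (h j ⟨hj, trivial⟩).symm⟩
    · rintro ⟨b, rfl⟩ j ⟨hj, -⟩
      rw [update_of_ne hj]
  simp only [Matrix.one_apply, prod_boole, boole_mul]
  rw [← sum_image fun b _ c _ h => update_injective x i h, ← hfilter, sum_filter]
  refine sum_congr rfl fun y _ => ?_
  split_ifs <;> rfl

theorem choose_sub_choose_succ_eq_catalan (k : ℕ) :
    (2 * k).choose k - (2 * k).choose (k + 1) = catalan k := by
  have hsucc := Nat.choose_succ_right_eq (2 * k) k
  have hcat := succ_mul_catalan_eq_centralBinom k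
  rw [Nat.centralBinom_eq_two_mul_choose] at hcat
  rw [show 2 * k - k = k by omega] at hsucc
  apply Nat.eq_of_mul_eq_mul_left k.succ_pos
  rw [Nat.mul_sub, mul_comm (k + 1) ((2 * k).choose (k + 1)), hsucc, hcat, Nat.succ_mul,
    mul_comm k, Nat.add_sub_cancel_left]

section Sl2

open scoped ComplexOrder

abbrev sl2E : Matrix (Fin 2) (Fin 2) ℂ := single 0 1 1
abbrev sl2F : Matrix (Fin 2) (Fin 2) ℂ := single 1 0 1
abbrev sl2H : Matrix (Fin 2) (Fin 2) ℂ := diagonal ![1, -1]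

theorem sl2E_conjTranspose : sl2Eᴴ = sl2F := by simp

theorem lie_sl2E_sl2F : ⁅sl2E, sl2F⁆ = sl2H := by
  ext i j; fin_cases i <;> fin_cases j <;> simp [Ring.lie_def]

theorem lie_sl2H_sl2E : ⁅sl2H, sl2E⁆ = (2 : ℂ) • sl2E := by
  ext i j; fin_cases i <;> fin_cases j <;> norm_num [Ring.lie_def]

theorem lie_sl2H_sl2F : ⁅sl2H, sl2F⁆ = (-2 : ℂ) • sl2F := by
  ext i j; fin_cases i <;> fin_cases j <;> norm_num [Ring.lie_def]

variable {ι : Type*} [Fintype ι] [DecidableEq ι]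

theorem star_lieRep_sl2F_dotProduct_self {μ : ℂ} {v : (ι → Fin 2) → ℂ}
    (hv : v ∈ eigenspace (lieRep sl2H) μ) :
    star (lieRep sl2F v) ⬝ᵥ lieRep sl2F v =
      star (lieRep sl2E v) ⬝ᵥ lieRep sl2E v + μ * (star v ⬝ᵥ v) := by
  rw [← sl2E_conjTranspose]
  exact star_lieRep_conjTranspose_dotProduct_self sl2E
    (by rwa [sl2E_conjTranspose, lie_sl2E_sl2F])

theorem lieRep_sl2E_eq_zero {v : (ι → Fin 2) → ℂ} (hH : lieRep sl2H v = 0)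
    (hF : lieRep sl2F v = 0) : lieRep sl2E v = 0 := by
  have := star_lieRep_sl2F_dotProduct_self (μ := 0) (v := v)
    (by rwa [eigenspace_zero, LinearMap.mem_ker])
  rwa [hF, dotProduct_zero, zero_mul, add_zero, eq_comm, dotProduct_star_self_eq_zero] at this

theorem eq_zero_of_lieRep_sl2F_lieRep_sl2E_eq_zero {v : (ι → Fin 2) → ℂ}
    (hv : v ∈ eigenspace (lieRep sl2H) (-2)) (h : lieRep sl2F (lieRep sl2E v) = 0) : v = 0 := by
  have hE : lieRep sl2E v = 0 := by
    rw [← dotProduct_star_self_eq_zero, star_lieRep_dotProduct, sl2E_conjTranspose, h,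
      dotProduct_zero]
  have hnorm := star_lieRep_sl2F_dotProduct_self hv
  rw [hE, dotProduct_zero, zero_add] at hnorm
  have hsum : star (lieRep sl2F v) ⬝ᵥ lieRep sl2F v + 2 * (star v ⬝ᵥ v) = 0 := by
    rw [hnorm]; ring
  rw [add_eq_zero_iff_of_nonneg (dotProduct_star_self_nonneg _)
    (mul_nonneg zero_le_two (dotProduct_star_self_nonneg v)), mul_eq_zero] at hsum
  exact dotProduct_star_self_eq_zero.1 (hsum.2.resolve_left two_ne_zero)

theorem map_lieRep_sl2F_eigenspace_zero :
    (eigenspace (lieRep (ι := ι) sl2H) 0).map (lieRep sl2F) =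
      eigenspace (lieRep sl2H) (-2) := by
  have hF := mapsTo_eigenspace_of_lie_eq_smul
    (by rw [← lieRep_lie, lie_sl2H_sl2F, map_smul] : ⁅lieRep (ι := ι) sl2H, lieRep sl2F⁆ = _) 0
  have hE := mapsTo_eigenspace_of_lie_eq_smul
    (by rw [← lieRep_lie, lie_sl2H_sl2E, map_smul] : ⁅lieRep (ι := ι) sl2H, lieRep sl2E⁆ = _) (-2)
  rw [zero_add] at hF
  rw [neg_add_cancel] at hE
  refine le_antisymm (Submodule.map_le_iff_le_comap.2 fun v hv => hF hv) fun w hw => ?_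
  let T : eigenspace (lieRep (ι := ι) sl2H) (-2) →ₗ[ℂ] eigenspace (lieRep (ι := ι) sl2H) (-2) :=
    (lieRep sl2F * lieRep sl2E).restrict fun v hv => by
      rw [Module.End.mul_apply]; exact hF (hE hv)
  have hT : Function.Injective T := by
    rw [← LinearMap.ker_eq_bot, eq_bot_iff]
    intro v hv
    exact Subtype.ext (eq_zero_of_lieRep_sl2F_lieRep_sl2E_eq_zero v.2
      (congrArg Subtype.val (LinearMap.mem_ker.1 hv)))
  obtain ⟨v, hv⟩ := LinearMap.injective_iff_surjective.1 hT ⟨w, hw⟩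
  exact ⟨_, hE v.2, congrArg Subtype.val hv⟩

theorem finrank_eigenspace_lieRep_sl2H (ℓ : ℕ) :
    finrank ℂ (eigenspace (lieRep (ι := ι) sl2H) (Fintype.card ι - 2 * ℓ)) =
      (Fintype.card ι).choose ℓ := by
  have hweight : ∀ x : ι → Fin 2,
      ∑ i, ![(1 : ℂ), -1] (x i) = Fintype.card ι - 2 * hammingNorm x := by
    intro x
    have h : ∀ a : Fin 2, ![(1 : ℂ), -1] a = 1 - 2 * if a ≠ 0 then 1 else 0 := by
      intro a; fin_cases a <;> norm_num
    simp only [h, sum_sub_distrib, ← mul_sum, sum_boole, hammingNorm, sum_const, card_univ,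
      nsmul_eq_mul, mul_one]
  rw [lieRep_diagonal, finrank_eigenspace_toLin'_diagonal, ← card_hammingNorm_eq]
  refine Nat.card_congr (Equiv.subtypeEquivRight fun x => ?_)
  rw [hweight, sub_right_inj, mul_right_inj' two_ne_zero, Nat.cast_inj]

end Sl2

noncomputable def transvectionAddChar {ι F : Type*} [Fintype ι] [DecidableEq ι] [Field F]
    {i j : ι} (hij : i ≠ j) : AddChar F (SpecialLinearGroup ι F) where
  toFun := SpecialLinearGroup.transvection hij
  map_zero_eq_one' := SpecialLinearGroup.transvection_coeff_zero hij
  map_add_eq_mul' a b := Subtype.ext (transvection_mul_transvection_same i j hij a b).symm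

noncomputable def torusAddChar : AddChar ℂ SL2 where
  toFun t := SpecialLinearGroup.diag2 (Complex.exp t) (Complex.exp_ne_zero t)
  map_zero_eq_one' := by
    ext i j; fin_cases i <;> fin_cases j <;> simp [SpecialLinearGroup.diag2_coe']
  map_add_eq_mul' s t := by
    ext i j
    fin_cases i <;> fin_cases j <;> simp [SpecialLinearGroup.diag2_coe', Complex.exp_add, mul_comm]

theorem hasDerivAt_transvectionAddChar {i j : Fin 2} (hij : i ≠ j) (a b : Fin 2) :
    HasDerivAt (fun t => (transvectionAddChar (F := ℂ) hij t : Matrix (Fin 2) (Fin 2) ℂ) a b)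
      (single i j 1 a b) 0 := by
  have hfun : (fun t => (transvectionAddChar hij t : Matrix (Fin 2) (Fin 2) ℂ) a b) =
      fun t => (1 : Matrix (Fin 2) (Fin 2) ℂ) a b + t * single i j 1 a b := by
    ext t
    change (SpecialLinearGroup.transvection hij t : Matrix (Fin 2) (Fin 2) ℂ) a b = _
    simp [SpecialLinearGroup.transvection_coe, single_apply]
  rw [hfun]
  simpa using ((hasDerivAt_id (0 : ℂ)).mul_const (single i j (1 : ℂ) a b)).const_add
    ((1 : Matrix (Fin 2) (Fin 2) ℂ) a b)

theorem hasDerivAt_torusAddChar (a b : Fin 2) :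
    HasDerivAt (fun t => (torusAddChar t : Matrix (Fin 2) (Fin 2) ℂ) a b) (sl2H a b) 0 := by
  fin_cases a <;> fin_cases b <;> simp [torusAddChar, SpecialLinearGroup.diag2_coe']
  · simpa using Complex.hasDerivAt_exp 0
  · exact hasDerivAt_const 0 0
  · exact hasDerivAt_const 0 0
  · simp_rw [← Complex.exp_neg]
    simpa using (hasDerivAt_neg (0 : ℂ)).cexp

theorem hasDerivAt_sl2Rep {N : ℕ} {γ : ℂ → SL2} (hγ₀ : γ 0 = 1)
    {X : Matrix (Fin 2) (Fin 2) ℂ}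
    (hγ : ∀ a b, HasDerivAt (fun t => (γ t : Matrix (Fin 2) (Fin 2) ℂ) a b) (X a b) 0)
    (w : TP N) : HasDerivAt (fun t => sl2Rep N (γ t) w) (lieRep X w) 0 := by
  rw [hasDerivAt_pi]
  intro x
  have hd := HasDerivAt.fun_sum fun y (_ : y ∈ univ) =>
    (HasDerivAt.fun_finsetProd fun i (_ : i ∈ univ) => hγ (x i) (y i)).mul_const (w y)
  convert hd using 1
  · ext t
    simp [sl2Rep, kronPow, toLin'_apply, mulVec, dotProduct]
  · have hγ₀' : (γ 0 : Matrix (Fin 2) (Fin 2) ℂ) = 1 := by rw [hγ₀]; rfl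
    simp only [hγ₀', smul_eq_mul, sum_mul, lieRep_apply]
    conv_rhs => rw [sum_comm]
    refine sum_congr rfl fun i _ => ?_
    simp only [mul_assoc, sum_prod_erase_one_apply_mul x i fun y => X (x i) (y i) * w y,
      update_self]

theorem forall_sl2Rep_addChar_eq_self_iff {N : ℕ} (γ : AddChar ℂ SL2)
    {X : Matrix (Fin 2) (Fin 2) ℂ}
    (hγ : ∀ a b, HasDerivAt (fun t => (γ t : Matrix (Fin 2) (Fin 2) ℂ) a b) (X a b) 0)
    (w : TP N) : (∀ t, sl2Rep N (γ t) w = w) ↔ lieRep X w = 0 := by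
  have hderiv₀ := hasDerivAt_sl2Rep γ.map_zero_eq_one hγ w
  have hderiv : ∀ t,
      HasDerivAt (fun s => sl2Rep N (γ s) w) (sl2Rep N (γ t) (lieRep X w)) t := by
    intro t
    have h := (LinearMap.toContinuousLinearMap (sl2Rep N (γ t))).hasFDerivAt.comp_hasDerivAt
      (0 : ℂ) hderiv₀
    simp only [Function.comp_def, LinearMap.coe_toContinuousLinearMap', ← Module.End.mul_apply,
      ← map_mul, ← AddChar.map_add_eq_mul] at h
    rw [← sub_self t] at h
    simpa using h.comp_sub_const t t
  constructor
  · intro h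
    rw [show (fun t => sl2Rep N (γ t) w) = fun _ => w from funext h] at hderiv₀
    exact hderiv₀.unique (hasDerivAt_const 0 w)
  · intro h t
    have hconst := is_const_of_deriv_eq_zero (fun s => (hderiv s).differentiableAt)
      (fun s => by rw [(hderiv s).deriv, h, map_zero]) t 0
    rwa [γ.map_zero_eq_one, map_one, Module.End.one_apply] at hconst

theorem mem_repInvariants_sl2Rep_iff {N : ℕ} {v : TP N} :
    v ∈ repInvariants (sl2Rep N) ↔
      lieRep sl2E v = 0 ∧ lieRep sl2F v = 0 ∧ lieRep sl2H v = 0 := by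
  have hE := forall_sl2Rep_addChar_eq_self_iff _ (hasDerivAt_transvectionAddChar zero_ne_one) v
  have hF := forall_sl2Rep_addChar_eq_self_iff _ (hasDerivAt_transvectionAddChar one_ne_zero) v
  have hH := forall_sl2Rep_addChar_eq_self_iff _ hasDerivAt_torusAddChar v
  refine ⟨fun hv => ⟨hE.1 fun _ => hv _, hF.1 fun _ => hv _, hH.1 fun _ => hv _⟩, ?_⟩
  rintro ⟨hEv, hFv, hHv⟩ g
  refine SpecialLinearGroup.diagonal_transvection_induction' (fun g => sl2Rep N g v = v) g
    (fun i j hij c hc => ?_) (fun i j hij a => ?_) (fun A B hA hB => ?_)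
  · obtain ⟨t, ht⟩ : ∃ t, SpecialLinearGroup.diag2n hij c hc = torusAddChar t := by
      fin_cases i <;> fin_cases j
      · exact absurd rfl hij
      · refine ⟨Complex.log c, ?_⟩
        ext a b
        fin_cases a <;> fin_cases b <;>
          simp [SpecialLinearGroup.diag2n_coe, torusAddChar, Complex.exp_log hc]
      · refine ⟨-Complex.log c, ?_⟩
        ext a b
        fin_cases a <;> fin_cases b <;>
          simp [SpecialLinearGroup.diag2n_coe, torusAddChar, Complex.exp_neg, Complex.exp_log hc]
      · exact absurd rfl hij
    rw [ht]
    exact hH.2 hHv t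
  · fin_cases i <;> fin_cases j
    · exact absurd rfl hij
    · exact hE.2 hEv a
    · exact hF.2 hFv a
    · exact absurd rfl hij
  · simp only [map_mul, Module.End.mul_apply, hA, hB]

theorem repInvariants_sl2Rep_eq (N : ℕ) :
    repInvariants (sl2Rep N) = eigenspace (lieRep sl2H) 0 ⊓ LinearMap.ker (lieRep sl2F) := by
  ext v
  rw [mem_repInvariants_sl2Rep_iff, Submodule.mem_inf, eigenspace_zero, LinearMap.mem_ker,
    LinearMap.mem_ker]
  exact ⟨fun ⟨_, hF, hH⟩ => ⟨hH, hF⟩, fun ⟨hH, hF⟩ => ⟨lieRep_sl2E_eq_zero hH hF, hF, hH⟩⟩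

theorem finrank_repInvariants_sl2Rep (k : ℕ) :
    finrank ℂ (repInvariants (sl2Rep (2 * k))) = (2 * k).choose k - (2 * k).choose (k + 1) := by
  have hrank := finrank_map_add_finrank_inf_ker (lieRep sl2F)
    (eigenspace (lieRep (ι := Fin (2 * k)) sl2H) 0)
  have hmiddle := finrank_eigenspace_lieRep_sl2H (ι := Fin (2 * k)) k
  have hlower := finrank_eigenspace_lieRep_sl2H (ι := Fin (2 * k)) (k + 1)
  rw [Fintype.card_fin, Nat.cast_mul, Nat.cast_two, sub_self] at hmiddle
  rw [Fintype.card_fin, show ((2 * k : ℕ) : ℂ) - 2 * (k + 1 : ℕ) = -2 by push_cast; ring]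
    at hlower
  rw [map_lieRep_sl2F_eigenspace_zero, ← repInvariants_sl2Rep_eq, hmiddle, hlower] at hrank
  rw [← hrank, Nat.add_sub_cancel_left]

/-- **Multiplicity of the trivial representation and Catalan numbers.**
The multiplicity of the trivial `SL(2,ℂ)`-representation `M₁` in `(ℂ²)^{⊗2k}`
(diagonal action), i.e. the dimension of the space of `SL(2,ℂ)`-invariant
vectors, equals the `k`-th Catalan number. -/
theorem finrank_invariants_eq_catalan (k : ℕ) :
    Module.finrank ℂ (repInvariants (sl2Rep (2 * k))) = catalan k ∧
      (k + 1) * Module.finrank ℂ (repInvariants (sl2Rep (2 * k))) = Nat.choose (2 * k) k := by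
  have hcat : finrank ℂ (repInvariants (sl2Rep (2 * k))) = catalan k := by
    rw [finrank_repInvariants_sl2Rep, choose_sub_choose_succ_eq_catalan]
  refine ⟨hcat, ?_⟩
  rw [hcat, succ_mul_catalan_eq_centralBinom, Nat.centralBinom_eq_two_mul_choose]
end

section
/- The maximum over p ∈ [−1,1] of φ(p) = 13/12 + (4/3)p⁴ − (7/6)p² − (√3/2)·p·√(1−p²) is strictly less than 2·log 2. -/
/-- The limiting scalar of the normalized periodic Coxeter Laplacian `(1/N)·L_N`
in the leading component of the stationary Schur–Weyl representation with
parameter `p`: `φ(p) = 13/12 + (4/3)p⁴ - (7/6)p² - (√3/2)·p·√(1-p²)`. -/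
noncomputable def phi (p : ℝ) : ℝ :=
  13 / 12 + (8 / 6) * p ^ 4 - (7 / 6) * p ^ 2 - (Real.sqrt 3 / 2) * p * Real.sqrt (1 - p ^ 2)

/-- **The stationary Schur–Weyl constant is below the Yang–Yang ground energy.**
The maximum of `φ` over `[-1,1]` is strictly less than `2·log 2`. -/
theorem phi_lt_two_log_two : ∀ p ∈ Set.Icc (-1 : ℝ) 1, phi p < 2 * Real.log 2 := by
  intro p hp
  obtain ⟨hp1, hp2⟩ := hp
  have hx0 : (0:ℝ) ≤ 1 - p ^ 2 := by nlinarith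
  have hx1 : p ^ 2 ≤ 1 := by nlinarith
  set s := Real.sqrt (1 - p ^ 2) with hs
  have hs0 : 0 ≤ s := Real.sqrt_nonneg _
  have hs2 : s ^ 2 = 1 - p ^ 2 := Real.sq_sqrt hx0
  have h3 : (Real.sqrt 3) ^ 2 = 3 := Real.sq_sqrt (by norm_num)
  have h3pos : 0 < Real.sqrt 3 := Real.sqrt_pos.mpr (by norm_num)
  have hlog : (0.6931471803 : ℝ) < Real.log 2 := Real.log_two_gt_d9
  have hc : (1.3862943606 : ℝ) < 2 * Real.log 2 := by linarith
  unfold phi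
  rcases le_or_gt 0 p with hp0 | hp0
  · -- cross term is ≤ 0
    have hcross : 0 ≤ (Real.sqrt 3 / 2) * p * s :=
      mul_nonneg (mul_nonneg (by positivity) hp0) hs0
    nlinarith [sq_nonneg p, sq_nonneg (p^2 - 1)]
  · -- p < 0
    set q : ℝ := -p with hq
    have hq0 : 0 < q := by simp [hq]; linarith
    have hR0 : (0:ℝ) < 1.3862943606 - 13/12 - (8/6) * p ^ 4 + (7/6) * p ^ 2 := by
      nlinarith [sq_nonneg (p^2 - 1), sq_nonneg p, mul_nonneg (sq_nonneg p) hx0]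
    set R : ℝ := 1.3862943606 - 13/12 - (8/6) * p ^ 4 + (7/6) * p ^ 2 with hRdef
    -- key quartic inequality: (3/4) x (1-x) < R² with x = p²
    have hkey : (3/4) * (p^2 * (1 - p^2)) < R ^ 2 := by
      rw [hRdef]
      nlinarith [sq_nonneg (p^2 - 461/500), sq_nonneg (p^2 - 1/2), sq_nonneg p,
        mul_nonneg (sq_nonneg (p^2 - 461/500)) (sq_nonneg p),
        mul_nonneg (sq_nonneg (p^2 - 461/500)) hx0,
        mul_nonneg (mul_nonneg (sq_nonneg p) (sq_nonneg p)) hx0]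
    -- then (√3/2)·q·s < R
    have hqs0 : 0 ≤ q * s := mul_nonneg hq0.le hs0
    have hqs2 : (q * s) ^ 2 = p^2 * (1 - p^2) := by
      rw [mul_pow, hs2]; ring
    have hsq : (Real.sqrt 3 / 2 * (q * s)) ^ 2 < R ^ 2 := by
      rw [mul_pow, div_pow, h3, hqs2]; norm_num; linarith [hkey]
    have hlt : (Real.sqrt 3 / 2) * (q * s) < R := lt_of_pow_lt_pow_left₀ 2 hR0.le hsq
    have : -(Real.sqrt 3 / 2 * p * s) = Real.sqrt 3 / 2 * (q * s) := by
      rw [hq]; ring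
    linarith [hlt, hc]
end

section
/- Let N = 2n+k with k ≥ 1, and consider the nice pair λ = (k+n, n) ⊂ μ = (k+n+1, n+1). An isometric embedding i: π_λ → π_μ of S_N-representations has image contained in the (−1)-eigenspace of σ_{N+1} = (N+1, N+2) if and only if the corresponding unit vector h = p·t₂₁ + q·t₁₂ ∈ H(λ,μ) satisfies p = ∓√((r−1)/(2r)), q = ±√((r+1)/(2r)) with r = k+1. -/
open Matrix

/-- The 2×2 block of Young's orthogonal form for a Coxeter transposition acting on
the span of two tableaux interchanged by it, `r` being the axial distance:
`[[1/r, √(1-1/r²)], [√(1-1/r²), -1/r]]` in the basis `{t₂₁, t₁₂}`. -/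
noncomputable def yorMatrix (r : ℝ) : Matrix (Fin 2) (Fin 2) ℝ :=
  !![1 / r, Real.sqrt (1 - 1 / r ^ 2);
     Real.sqrt (1 - 1 / r ^ 2), -(1 / r)]

set_option maxHeartbeats 1000000 in
/-- **Characterization of the tensor Schur–Weyl embedding.**
For the nice pair `λ = (k+n, n) ⊂ μ = (k+n+1, n+1)` with `k ≥ 1` and `N = 2n+k`,
an isometric embedding `π_λ → π_μ` corresponds to a unit vector
`h = p·t₂₁ + q·t₁₂` of the multiplicity space `H(λ,μ)`, and the image of the
embedding lies in the `(-1)`-eigenspace of `σ_{N+1} = (N+1, N+2)` (which acts on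
`H(λ,μ)` by the Young orthogonal form matrix with axial distance `r = k+1`)
if and only if `p = ∓√((r-1)/(2r))`, `q = ±√((r+1)/(2r))`. -/
theorem tensor_embedding_iff (k : ℕ) (hk : 1 ≤ k) (p q : ℝ)
    (hpq : p ^ 2 + q ^ 2 = 1) :
    let r : ℝ := (k : ℝ) + 1
    (yorMatrix r *ᵥ ![p, q] = -![p, q]) ↔
      ((p = -Real.sqrt ((r - 1) / (2 * r)) ∧ q = Real.sqrt ((r + 1) / (2 * r))) ∨
       (p = Real.sqrt ((r - 1) / (2 * r)) ∧ q = -Real.sqrt ((r + 1) / (2 * r)))) := by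
  intro r
  have hk1 : (1 : ℝ) ≤ (k : ℝ) := by exact_mod_cast hk
  have hr2 : (2 : ℝ) ≤ r := by simp only [r]; linarith
  have hr0 : (0 : ℝ) < r := by linarith
  clear_value r
  set s := Real.sqrt (1 - 1 / r ^ 2) with hs
  set a := Real.sqrt ((r - 1) / (2 * r)) with ha
  set b := Real.sqrt ((r + 1) / (2 * r)) with hb
  have hinv : 1 / r ^ 2 < 1 := by
    rw [div_lt_one (by positivity)]; nlinarith
  have hs2 : s ^ 2 = 1 - 1 / r ^ 2 := Real.sq_sqrt (by linarith)
  have ha2 : a ^ 2 = (r - 1) / (2 * r) :=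
    Real.sq_sqrt (div_nonneg (by linarith) (by linarith))
  have hb2 : b ^ 2 = (r + 1) / (2 * r) :=
    Real.sq_sqrt (div_nonneg (by linarith) (by linarith))
  have hsnn : 0 ≤ s := Real.sqrt_nonneg _
  have hann : 0 ≤ a := Real.sqrt_nonneg _
  have hbnn : 0 ≤ b := Real.sqrt_nonneg _
  have hapos : 0 < a := Real.sqrt_pos.mpr (div_pos (by linarith) (by linarith))
  have hbpos : 0 < b := Real.sqrt_pos.mpr (div_pos (by linarith) (by linarith))
  have hspos : 0 < s := Real.sqrt_pos.mpr (by linarith)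
  -- key identities
  have hsb : s * b = (1 + 1 / r) * a := by
    have h1 : (s * b) ^ 2 = ((1 + 1 / r) * a) ^ 2 := by
      rw [mul_pow, mul_pow, hs2, hb2, ha2]
      field_simp; ring
    have h2 : 0 ≤ (1 + 1 / r) * a := by positivity
    nlinarith [mul_nonneg hsnn hbnn]
  have hsa : s * a = (1 - 1 / r) * b := by
    have h1 : (s * a) ^ 2 = ((1 - 1 / r) * b) ^ 2 := by
      rw [mul_pow, mul_pow, hs2, ha2, hb2]
      field_simp; ring
    have h2 : 0 ≤ (1 - 1 / r) * b := by
      apply mul_nonneg _ hbnn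
      have : 1 / r ≤ 1 := by rw [div_le_one hr0]; linarith
      linarith
    nlinarith [mul_nonneg hsnn hann]
  have hvec : (yorMatrix r *ᵥ ![p, q] = -![p, q]) ↔
      (1 / r * p + s * q = -p ∧ s * p + -(1 / r) * q = -q) := by
    rw [funext_iff, Fin.forall_fin_two]
    simp [yorMatrix, mulVec, dotProduct, Fin.sum_univ_two, hs]
  rw [hvec]
  have hs2' : s ^ 2 * r ^ 2 = r ^ 2 - 1 := by
    field_simp at hs2; linarith
  constructor
  · rintro ⟨h1, h2⟩
    have e1 : r * (s * q) = -(r + 1) * p := by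
      have : r * (1 / r * p + s * q) = r * (-p) := by rw [h1]
      field_simp at this; linarith
    have e2 : r * (s * p) = -(r - 1) * q := by
      have : r * (s * p + -(1 / r) * q) = r * (-q) := by rw [h2]
      field_simp at this; linarith
    have e1sq : (r * (s * q)) ^ 2 = (-(r + 1) * p) ^ 2 := by rw [e1]
    have key : (r ^ 2 - 1) * q ^ 2 = (r + 1) ^ 2 * p ^ 2 := by
      linear_combination e1sq - q ^ 2 * hs2'
    have hp2 : p ^ 2 * (2 * r) = r - 1 := by nlinarith [key]
    have hp2' : p ^ 2 = a ^ 2 := by rw [ha2]; field_simp; linarith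
    have hq2' : q ^ 2 = b ^ 2 := by rw [hb2]; field_simp; nlinarith [hp2]
    have e2q : r * (s * (p * q)) = -(r - 1) * q ^ 2 := by linear_combination q * e2
    have hpq0 : p * q ≤ 0 := by nlinarith [e2q, sq_nonneg q, mul_pos hr0 hspos]
    rcases sq_eq_sq_iff_eq_or_eq_neg.mp hp2' with hp | hp
    · right; refine ⟨hp, ?_⟩
      rcases sq_eq_sq_iff_eq_or_eq_neg.mp hq2' with hq | hq
      · exfalso; rw [hp, hq] at hpq0; nlinarith
      · exact hq
    · left; refine ⟨hp, ?_⟩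
      rcases sq_eq_sq_iff_eq_or_eq_neg.mp hq2' with hq | hq
      · exact hq
      · exfalso; rw [hp, hq] at hpq0; nlinarith
  · rintro (⟨hp, hq⟩ | ⟨hp, hq⟩) <;> subst hp <;> subst hq
    · exact ⟨by linear_combination hsb, by linear_combination -hsa⟩
    · exact ⟨by linear_combination -hsb, by linear_combination hsa⟩
end
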